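/- If T is quasi-increasing on (0,∞) (i.e., there is C>0 with T(x) ≤ C·T(y) whenever 0<x<y), T(x) ≥ Λ > 1 for all x ≠ 0, and there exist constants 0<c₀<1 and C₀>0 such that (1/C₀)T(x) ≤ T(x[1 ± c₀/T(x)]) ≤ C₀T(x) for all x ∈ ℝ, then there exist constants 0<c<1 and C>0 such that (1/C)T(x) ≤ T(x ± c/T(x)) ≤ C·T(x) for every x ∈ ℝ. -/
import Mathlib


/-- Lemma 3.4: additive perturbation stability of `T` follows from
multiplicative perturbation stability, quasi-increase and `T ≥ Λ > 1`. -/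
theorem additive_stability_of_T
    (T : ℝ → ℝ)
    (hpos : ∀ x : ℝ, 0 < T x)
    (heven : ∀ x : ℝ, T (-x) = T x)
    (hqi : ∃ Cq > (0:ℝ), ∀ x y : ℝ, 0 < x → x < y → T x ≤ Cq * T y)
    (Λ : ℝ) (hΛ : 1 < Λ) (hTΛ : ∀ x : ℝ, x ≠ 0 → Λ ≤ T x)
    (c₀ C₀ : ℝ) (hc₀ : 0 < c₀) (hc₀1 : c₀ < 1) (hC₀ : 0 < C₀)
    (hmul : ∀ x : ℝ,
      (T x / C₀ ≤ T (x * (1 + c₀ / T x)) ∧ T (x * (1 + c₀ / T x)) ≤ C₀ * T x) ∧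
      (T x / C₀ ≤ T (x * (1 - c₀ / T x)) ∧ T (x * (1 - c₀ / T x)) ≤ C₀ * T x)) :
    ∃ c C : ℝ, 0 < c ∧ c < 1 ∧ 0 < C ∧ ∀ x : ℝ,
      (T x / C ≤ T (x + c / T x) ∧ T (x + c / T x) ≤ C * T x) ∧
      (T x / C ≤ T (x - c / T x) ∧ T (x - c / T x) ≤ C * T x) := by
  obtain ⟨Cq0, hCq0, hqi0⟩ := hqi
  set Cq : ℝ := max Cq0 1 with hCqdef
  have hCq1 : (1:ℝ) ≤ Cq := le_max_right _ _
  have hCqpos : (0:ℝ) < Cq := lt_of_lt_of_le one_pos hCq1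
  have hqi' : ∀ x y : ℝ, 0 < x → x ≤ y → T x ≤ Cq * T y := by
    intro x y hx hxy
    rcases eq_or_lt_of_le hxy with h | h
    · subst h; nlinarith [hpos x]
    · exact le_trans (hqi0 x y hx h)
        (mul_le_mul_of_nonneg_right (le_max_left _ _) (hpos y).le)
  -- C₀ ≥ 1, from hmul at 0
  have hC₀1 : (1:ℝ) ≤ C₀ := by
    have h := (hmul 0).1.2
    simp only [zero_mul] at h
    nlinarith [hpos 0]
  -- Big case: x ≥ 1
  have hC₁pos : 0 < Cq * C₀ := mul_pos hCqpos hC₀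
  have hbig : ∀ x : ℝ, 1 ≤ x →
      (T x / (Cq * C₀) ≤ T (x + c₀ / T x) ∧ T (x + c₀ / T x) ≤ (Cq * C₀) * T x) ∧
      (T x / (Cq * C₀) ≤ T (x - c₀ / T x) ∧ T (x - c₀ / T x) ≤ (Cq * C₀) * T x) := by
    intro x hx
    have hx0 : 0 < x := lt_of_lt_of_le one_pos hx
    have hTx := hpos x
    have hΛx : Λ ≤ T x := hTΛ x (ne_of_gt hx0)
    have hr : 0 < c₀ / T x := div_pos hc₀ hTx
    have hr1 : c₀ / T x < 1 := by
      rw [div_lt_one hTx]; linarith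
    have hlo : 0 < x * (1 - c₀ / T x) := mul_pos hx0 (by linarith)
    have h1 : x * (1 - c₀ / T x) ≤ x + c₀ / T x := by nlinarith
    have h2 : x * (1 - c₀ / T x) ≤ x - c₀ / T x := by nlinarith
    have h3 : x + c₀ / T x ≤ x * (1 + c₀ / T x) := by nlinarith
    have h4 : x - c₀ / T x ≤ x := by linarith
    have hxr : 0 < x + c₀ / T x := by linarith
    have hxr' : 0 < x - c₀ / T x := by nlinarith
    obtain ⟨⟨hmp1, hmp2⟩, ⟨hmm1, hmm2⟩⟩ := hmul x
    constructor
    · constructor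
      · have q := hqi' (x * (1 - c₀ / T x)) (x + c₀ / T x) hlo h1
        have h5 : T x / C₀ ≤ Cq * T (x + c₀ / T x) := le_trans hmm1 q
        rw [div_le_iff₀ hC₀] at h5
        rw [div_le_iff₀ hC₁pos]
        linarith
      · have q := hqi' (x + c₀ / T x) (x * (1 + c₀ / T x)) hxr h3
        have h5 := mul_le_mul_of_nonneg_left hmp2 hCqpos.le
        linarith
    · constructor
      · have q := hqi' (x * (1 - c₀ / T x)) (x - c₀ / T x) hlo h2
        have h5 : T x / C₀ ≤ Cq * T (x - c₀ / T x) := le_trans hmm1 q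
        rw [div_le_iff₀ hC₀] at h5
        rw [div_le_iff₀ hC₁pos]
        linarith
      · have q := hqi' (x - c₀ / T x) x hxr' h4
        nlinarith [q, hC₀1, mul_pos hCqpos hTx]
  -- Negative big case via evenness
  have hneg : ∀ x : ℝ, x ≤ -1 →
      (T x / (Cq * C₀) ≤ T (x + c₀ / T x) ∧ T (x + c₀ / T x) ≤ (Cq * C₀) * T x) ∧
      (T x / (Cq * C₀) ≤ T (x - c₀ / T x) ∧ T (x - c₀ / T x) ≤ (Cq * C₀) * T x) := by
    intro x hx
    have h1 : (1:ℝ) ≤ -x := by linarith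
    obtain ⟨⟨hp1, hp2⟩, ⟨hm1, hm2⟩⟩ := hbig (-x) h1
    have e : T (-x) = T x := heven x
    rw [e] at hp1 hp2 hm1 hm2
    have eq1 : -x + c₀ / T x = -(x - c₀ / T x) := by ring
    have eq2 : -x - c₀ / T x = -(x + c₀ / T x) := by ring
    rw [eq1, heven (x - c₀ / T x)] at hp1 hp2
    rw [eq2, heven (x + c₀ / T x)] at hm1 hm2
    exact ⟨⟨hm1, hm2⟩, ⟨hp1, hp2⟩⟩
  -- Small case bounds
  set M : ℝ := max (Cq * T 2) (max (T 0) (T (c₀ / T 0))) with hMdef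
  set m : ℝ := min 1 (T 0) with hmdef
  have hm0 : 0 < m := lt_min one_pos (hpos 0)
  have hub : ∀ y : ℝ, |y| < 2 → T y ≤ M := by
    intro y hy
    rcases eq_or_ne y 0 with rfl | hy0
    · exact le_trans (le_max_left _ _) (le_max_right _ _)
    · have hya : 0 < |y| := abs_pos.mpr hy0
      have hTy : T |y| = T y := by
        rcases abs_choice y with h | h
        · rw [h]
        · rw [h, heven]
      have := hqi0 |y| 2 hya hy
      calc T y = T |y| := hTy.symm
        _ ≤ Cq0 * T 2 := this
        _ ≤ Cq * T 2 := mul_le_mul_of_nonneg_right (le_max_left _ _) (hpos 2).le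
        _ ≤ M := le_max_left _ _
  have hlb : ∀ y : ℝ, m ≤ T y := by
    intro y
    rcases eq_or_ne y 0 with rfl | hy0
    · exact min_le_right _ _
    · have := hTΛ y hy0
      have : (1:ℝ) ≤ T y := by linarith
      exact le_trans (min_le_left _ _) this
  set C₂ : ℝ := M / m with hC₂def
  set C : ℝ := max (Cq * C₀) C₂ with hCdef
  have hCpos : 0 < C := lt_of_lt_of_le hC₁pos (le_max_left _ _)
  have hC₂C : C₂ ≤ C := le_max_right _ _
  have hMC : M ≤ C * m := by
    rw [hC₂def, div_le_iff₀ hm0] at hC₂C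
    linarith
  -- generic small-case step
  have hstep : ∀ a b : ℝ, a ≤ M → m ≤ a → b ≤ M → m ≤ b → a / C ≤ b ∧ b ≤ C * a := by
    intro a b haM hma hbM hmb
    constructor
    · rw [div_le_iff₀ hCpos]
      nlinarith
    · nlinarith
  refine ⟨c₀, C, hc₀, hc₀1, hCpos, ?_⟩
  intro x
  rcases le_or_gt 1 |x| with hx | hx
  · -- |x| ≥ 1
    have hres : (T x / (Cq * C₀) ≤ T (x + c₀ / T x) ∧ T (x + c₀ / T x) ≤ (Cq * C₀) * T x) ∧
        (T x / (Cq * C₀) ≤ T (x - c₀ / T x) ∧ T (x - c₀ / T x) ≤ (Cq * C₀) * T x) := by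
      rcases le_abs.mp hx with h | h
      · exact hbig x h
      · exact hneg x (by linarith)
    obtain ⟨⟨a1, a2⟩, ⟨b1, b2⟩⟩ := hres
    have hC1C : (Cq * C₀) ≤ C := le_max_left _ _
    have hd : T x / C ≤ T x / (Cq * C₀) :=
      div_le_div_of_nonneg_left (hpos x).le hC₁pos hC1C
    refine ⟨⟨le_trans hd a1, ?_⟩, ⟨le_trans hd b1, ?_⟩⟩
    · exact le_trans a2 (mul_le_mul_of_nonneg_right hC1C (hpos x).le)
    · exact le_trans b2 (mul_le_mul_of_nonneg_right hC1C (hpos x).le)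
  · -- |x| < 1
    have hxM : T x ≤ M := hub x (by linarith)
    have hxm : m ≤ T x := hlb x
    have hubpm : T (x + c₀ / T x) ≤ M ∧ T (x - c₀ / T x) ≤ M := by
      rcases eq_or_ne x 0 with rfl | hx0
      · constructor
        · have : (0:ℝ) + c₀ / T 0 = c₀ / T 0 := by ring
          rw [this]
          exact le_trans (le_max_right _ _) (le_max_right _ _)
        · have : (0:ℝ) - c₀ / T 0 = -(c₀ / T 0) := by ring
          rw [this, heven]
          exact le_trans (le_max_right _ _) (le_max_right _ _)
      · have hΛx : Λ ≤ T x := hTΛ x hx0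
        have hr : 0 < c₀ / T x := div_pos hc₀ (hpos x)
        have hr1 : c₀ / T x < 1 := by
          rw [div_lt_one (hpos x)]; linarith
        constructor
        · apply hub
          have h := abs_add_le x (c₀ / T x)
          rw [abs_of_pos hr] at h
          linarith
        · apply hub
          have h := abs_sub x (c₀ / T x)
          rw [abs_of_pos hr] at h
          linarith
    obtain ⟨hup, hum⟩ := hubpm
    have h1 := hstep (T x) (T (x + c₀ / T x)) hxM hxm hup (hlb _)
    have h2 := hstep (T x) (T (x - c₀ / T x)) hxM hxm hum (hlb _)
    exact ⟨⟨h1.1, h1.2⟩, ⟨h2.1, h2.2⟩⟩
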